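/- The fundamental group of the group presented by $\langle x_1, x_2 \mid x_1 x_2 x_1 x_2^{-1} x_1^{-1} x_2^{-1} \rangle$ (the trefoil group) is not isomorphic to $\mathbb{Z}$. -/
import Mathlib


/-- The trefoil knot group `⟨x₁, x₂ ∣ x₁x₂x₁x₂⁻¹x₁⁻¹x₂⁻¹⟩`. -/
def trefoilRels : Set (FreeGroup (Fin 2)) :=
  {FreeGroup.of 0 * FreeGroup.of 1 * FreeGroup.of 0 *
    (FreeGroup.of 1)⁻¹ * (FreeGroup.of 0)⁻¹ * (FreeGroup.of 1)⁻¹}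

private def trefF : Fin 2 → Equiv.Perm (Fin 3) :=
  ![Equiv.swap 0 1, Equiv.swap 1 2]

private lemma trefF_rel : ∀ r ∈ trefoilRels, FreeGroup.lift trefF r = 1 := by
  intro r hr
  rw [trefoilRels, Set.mem_singleton_iff] at hr
  subst hr
  simp only [map_mul, map_inv, FreeGroup.lift_apply_of]
  decide

/-- The group `⟨x₁, x₂ ∣ x₁x₂x₁x₂⁻¹x₁⁻¹x₂⁻¹⟩` (the trefoil group) is not isomorphic to `ℤ`. -/
theorem stmt7 : IsEmpty (PresentedGroup trefoilRels ≃* Multiplicative ℤ) := by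
  constructor
  intro e
  let φ := PresentedGroup.toGroup trefF_rel
  have hcomm : ∀ a b : PresentedGroup trefoilRels, a * b = b * a := by
    intro a b
    apply e.injective
    simp only [map_mul]
    exact mul_comm _ _
  have h := hcomm (PresentedGroup.of 0) (PresentedGroup.of 1)
  have h2 := congrArg φ h
  simp only [map_mul, PresentedGroup.toGroup.of, φ] at h2
  revert h2
  decide
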